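/- arXiv:2108.02473 — 3 statements merged into one kernel-verified Lean document; each statement's English description precedes it below -/
import Mathlib

section
/- A functor f : C → D of ∞-categories is coinitial if and only if the induced functor C^▷ → D^▷ on the ∞-categories obtained by freely adjoining a terminal object is coinitial. -/
open CategoryTheory

universe v₁ v₂ u₁ u₂

namespace Stmt2Aux

variable {C : Type u₁} [Category.{v₁} C] {D : Type u₂} [Category.{v₂} D] (F : C ⥤ D)

/-- The comparison functor between comma categories. -/
@[simps]
def toWT (d : D) :
    CostructuredArrow F d ⥤ CostructuredArrow (WithTerminal.map F) (WithTerminal.of d) where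
  obj X := CostructuredArrow.mk
    (Y := WithTerminal.of X.left)
    (show WithTerminal.of (F.obj X.left) ⟶ WithTerminal.of d from X.hom)
  map {X Y} f := CostructuredArrow.homMk
    (show WithTerminal.of X.left ⟶ WithTerminal.of Y.left from f.left)
    (by
      have h := CostructuredArrow.w f
      exact congrArg (fun (g : F.obj X.left ⟶ d) =>
        (show WithTerminal.of (F.obj X.left) ⟶ WithTerminal.of d from g)) h)

instance (d : D) : (toWT F d).Faithful where
  map_injective {X Y} f g h := by
    ext
    have := congrArg CommaMorphism.left h
    exact this

instance (d : D) : (toWT F d).Full where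
  map_surjective {X Y} f := by
    refine ⟨CostructuredArrow.homMk (WithTerminal.down f.left) ?_, ?_⟩
    · have h := CostructuredArrow.w f
      exact congrArg WithTerminal.down h
    · ext
      rfl

instance (d : D) : (toWT F d).EssSurj where
  mem_essImage X := by
    obtain ⟨Y, ⟨⟩, u⟩ := X
    cases Y with
    | of c =>
      exact ⟨CostructuredArrow.mk (WithTerminal.down u),
        ⟨Iso.refl _⟩⟩
    | star => exact (u : PEmpty).elim

instance (d : D) : (toWT F d).IsEquivalence where

lemma star_connected : IsConnected (CostructuredArrow (WithTerminal.map F) WithTerminal.star) := by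
  have : Nonempty (CostructuredArrow (WithTerminal.map F) WithTerminal.star) :=
    ⟨CostructuredArrow.mk (Y := WithTerminal.star) (𝟙 _)⟩
  apply zigzag_isConnected
  intro X Y
  have hX : X ⟶ CostructuredArrow.mk (Y := WithTerminal.star)
      (𝟙 (WithTerminal.star : WithTerminal D)) :=
    CostructuredArrow.homMk (WithTerminal.starTerminal.from _)
      (Subsingleton.elim (α := ((WithTerminal.map F).obj X.left ⟶ WithTerminal.star)) _ _)
  have hY : Y ⟶ CostructuredArrow.mk (Y := WithTerminal.star)
      (𝟙 (WithTerminal.star : WithTerminal D)) :=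
    CostructuredArrow.homMk (WithTerminal.starTerminal.from _)
      (Subsingleton.elim (α := ((WithTerminal.map F).obj Y.left ⟶ WithTerminal.star)) _ _)
  exact Zigzag.trans (Zigzag.of_hom hX) (Zigzag.of_inv hY)

end Stmt2Aux

theorem stmt2 {C : Type u₁} [Category.{v₁} C] {D : Type u₂} [Category.{v₂} D]
    (F : C ⥤ D) :
    F.Initial ↔ (WithTerminal.map F).Initial := by
  constructor
  · intro h
    constructor
    intro d
    cases d with
    | of d =>
      have := h.out d
      exact isConnected_of_equivalent (Stmt2Aux.toWT F d).asEquivalence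
    | star => exact Stmt2Aux.star_connected F
  · intro h
    constructor
    intro d
    have := h.out (WithTerminal.of d)
    exact isConnected_of_equivalent (Stmt2Aux.toWT F d).asEquivalence.symm
end

section
/- Let sp^{n,∘} be the poset with objects A_k, B_k for k = 1,…,n, ordered by: A_k ≤ A_j and B_k ≤ B_j iff k ≥ j, and A_k ≤ B_j and B_k ≤ A_j iff k > j, and let ∞ denote a terminal element adjoined to it as in the paper. Let F be a diagram in an ∞-category C with pullbacks, defined on this poset with an initial object −∞ also adjoined. Define M₀ := F(∞) and inductively M_i as the pullback of F(A_i) → M_{i−1} ← F(B_i). Then F is a limit diagram if and only if the square with corners F(−∞), F(A_n), F(B_n), M_{n−1} is cartesian, i.e. the induced map F(−∞) → M_n is an equivalence. -/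
/-!
STATEMENT 4: Let `sp^{n,∘}` be the poset with objects `A_k, B_k` (k = 1,…,n), ordered
by `A_k ≤ A_j`, `B_k ≤ B_j` iff `k ≥ j` and `A_k ≤ B_j`, `B_k ≤ A_j` iff `k > j`.
Let `F : sp^{n,▷} → C` be a diagram in a category `C` with pullbacks, defined on
`sp^{n,∘}` with an initial object `−∞` and a terminal object `∞` adjoined (the poset
`SpO n` below, with `A`/`B` indexed by `Fin n`, where the index `i : Fin n` encodes
`A_{i+1}`).  Define `M₀ := F(∞)` and inductively `M_i` as the pullback of
`F(A_i) → M_{i−1} ← F(B_i)` (the maps being the canonical cone maps).  Then `F` is a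
limit diagram (i.e. the cone on `F|_{sp^{n,∘} ∪ {∞}}` with apex `F(−∞)` is a limit
cone) if and only if the square with corners `F(−∞)`, `F(A_n)`, `F(B_n)`, `M_{n−1}`
is cartesian.

The tower `M_i` together with its pullback projections `pA, pB` and the canonical
cone maps `qA i : F(A_{i+1}) → M_i`, `qB i : F(B_{i+1}) → M_i` is encoded as data,
pinned down uniquely by the hypotheses: `hpb` says each `M_{i+1}` is the pullback of
`F(A_{i+1}) → M_i ← F(B_{i+1})`; `hqA0`/`hqB0` say the cone maps to `M₀ ≅ F(∞)` are
the canonical ones; and `hstep**` say the cone maps to a pullback `M_{i+1}` are the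
ones induced by the images under `F` of the order relations.
-/

open CategoryTheory CategoryTheory.Limits

universe v u

/-- The poset `sp^{n,∘}` with an initial object `bot = −∞` and terminal object
`top = ∞` adjoined. -/
inductive SpO (n : ℕ) : Type
  | bot : SpO n
  | top : SpO n
  | A : Fin n → SpO n
  | B : Fin n → SpO n

namespace SpO

variable {n : ℕ}

protected def le : SpO n → SpO n → Prop
  | _, .top => True
  | .bot, _ => True
  | .A k, .A j => (j : ℕ) ≤ (k : ℕ)
  | .B k, .B j => (j : ℕ) ≤ (k : ℕ)
  | .A k, .B j => (j : ℕ) < (k : ℕ)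
  | .B k, .A j => (j : ℕ) < (k : ℕ)
  | _, _ => False

instance : Preorder (SpO n) where
  le := SpO.le
  le_refl a := by cases a <;> simp [SpO.le]
  le_trans a b c hab hbc := by
    cases a <;> cases b <;> cases c <;> simp_all [SpO.le] <;> omega

lemma bot_le' (x : SpO n) : (bot : SpO n) ≤ x := by cases x <;> trivial

lemma le_top' (x : SpO n) : x ≤ (top : SpO n) := by cases x <;> trivial

lemma A_le_A {i j : Fin n} (h : (i : ℕ) ≤ (j : ℕ)) : (A j : SpO n) ≤ A i := h

lemma B_le_B {i j : Fin n} (h : (i : ℕ) ≤ (j : ℕ)) : (B j : SpO n) ≤ B i := h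

lemma A_le_B {i j : Fin n} (h : (i : ℕ) < (j : ℕ)) : (A j : SpO n) ≤ B i := h

lemma B_le_A {i j : Fin n} (h : (i : ℕ) < (j : ℕ)) : (B j : SpO n) ≤ A i := h

end SpO

/-- The subposet `sp^{n,∘} ∪ {∞}` of all objects except the initial one. -/
def SpOPos (n : ℕ) : Type := {x : SpO n // x ≠ SpO.bot}

instance (n : ℕ) : Preorder (SpOPos n) := by unfold SpOPos; infer_instance

/-- The inclusion of the subposet of non-initial objects. -/
def spoIncl (n : ℕ) : SpOPos n ⥤ SpO n :=
  Monotone.functor (f := Subtype.val) fun _ _ h => h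

/-- The cone on the restriction of `F` away from `−∞` with apex `F(−∞)`. -/
def spoCone {C : Type u} [Category.{v} C] {n : ℕ} (F : SpO n ⥤ C) :
    Cone (spoIncl n ⋙ F) where
  pt := F.obj SpO.bot
  π :=
    { app := fun x => F.map (homOfLE (SpO.bot_le' x.1))
      naturality := fun x y f => by
        dsimp
        rw [Category.id_comp, ← F.map_comp]
        congr 1 }

namespace SpoAux

variable {C : Type u} [Category.{v} C] {n : ℕ}

/-- Composition of images of order relations under `F`. -/
lemma fcomp (F : SpO n ⥤ C) {x y z : SpO n} (h1 : x ≤ y) (h2 : y ≤ z) :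
    F.map (homOfLE h1) ≫ F.map (homOfLE h2) = F.map (homOfLE (h1.trans h2)) := by
  rw [← F.map_comp]; congr 1

lemma snat (F : SpO n ⥤ C) (s : Cone (spoIncl n ⋙ F)) (x y : SpOPos n) (h : x.1 ≤ y.1) :
    s.π.app x ≫ F.map (homOfLE h) = s.π.app y :=
  s.w (homOfLE h)

variable (hn : 0 < n)

/-- The last index. -/
def mfin : Fin n := ⟨n - 1, Nat.sub_lt hn Nat.one_pos⟩

lemma A_ne_bot : (SpO.A (mfin hn) : SpO n) ≠ SpO.bot := fun h => nomatch h
lemma B_ne_bot : (SpO.B (mfin hn) : SpO n) ≠ SpO.bot := fun h => nomatch h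

/-- The legs of the cone determined by maps to `F(A_n)` and `F(B_n)`. -/
def spoLeg (F : SpO n ⥤ C) {X : C} (a : X ⟶ F.obj (SpO.A (mfin hn)))
    (b : X ⟶ F.obj (SpO.B (mfin hn))) : ∀ x : SpOPos n, X ⟶ F.obj x.1
  | ⟨SpO.bot, hx⟩ => absurd rfl hx
  | ⟨SpO.top, _⟩ => a ≫ F.map (homOfLE (SpO.le_top' _))
  | ⟨SpO.A j, _⟩ => a ≫ F.map (homOfLE (SpO.A_le_A (Nat.le_sub_one_of_lt j.isLt)))
  | ⟨SpO.B j, _⟩ => b ≫ F.map (homOfLE (SpO.B_le_B (Nat.le_sub_one_of_lt j.isLt)))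

/-- A pair of maps equalizing all common components induces a cone. -/
def spoMkCone (F : SpO n ⥤ C) {X : C} (a : X ⟶ F.obj (SpO.A (mfin hn)))
    (b : X ⟶ F.obj (SpO.B (mfin hn)))
    (hc : ∀ (x : SpO n) (h1 : SpO.A (mfin hn) ≤ x) (h2 : SpO.B (mfin hn) ≤ x),
      a ≫ F.map (homOfLE h1) = b ≫ F.map (homOfLE h2)) :
    Cone (spoIncl n ⋙ F) where
  pt := X
  π :=
    { app := spoLeg hn F a b
      naturality := by
        intro x' y' f
        dsimp only [Functor.const_obj_map, Functor.const_obj_obj, Functor.comp_map]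
        rcases x' with ⟨x, hx⟩; rcases y' with ⟨y, hy⟩
        have hle : x ≤ y := leOfHom f
        have hmap : (spoIncl n).map f = homOfLE hle := Subsingleton.elim _ _
        erw [Category.id_comp, hmap]
        symm
        have hmval : ((mfin hn : Fin n) : ℕ) = n - 1 := rfl
        cases x with
        | bot => exact absurd rfl hx
        | top =>
          cases y with
          | top => simp only [spoLeg]; exact (Category.assoc _ _ _).trans (whisker_eq _ (fcomp F _ _))
          | bot => exact absurd rfl hy
          | A j => exact ((hle : False)).elim
          | B j => exact ((hle : False)).elim
        | A j =>
          cases y with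
          | bot => exact absurd rfl hy
          | top => simp only [spoLeg]; exact (Category.assoc _ _ _).trans (whisker_eq _ (fcomp F _ _))
          | A j' => simp only [spoLeg]; exact (Category.assoc _ _ _).trans (whisker_eq _ (fcomp F _ _))
          | B j' =>
            have h1 : (j' : ℕ) < (j : ℕ) := hle
            have h2 : (j : ℕ) < n := j.isLt
            simp only [spoLeg]
            exact ((Category.assoc _ _ _).trans (whisker_eq _ (fcomp F _ _))).trans (hc (SpO.B j') (SpO.A_le_B (by omega)) (SpO.B_le_B (by omega)))
        | B j =>
          cases y with
          | bot => exact absurd rfl hy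
          | top =>
            simp only [spoLeg]
            exact ((Category.assoc _ _ _).trans (whisker_eq _ (fcomp F _ _))).trans (hc SpO.top (SpO.le_top' _) (SpO.le_top' _)).symm
          | B j' => simp only [spoLeg]; exact (Category.assoc _ _ _).trans (whisker_eq _ (fcomp F _ _))
          | A j' =>
            have h1 : (j' : ℕ) < (j : ℕ) := hle
            have h2 : (j : ℕ) < n := j.isLt
            simp only [spoLeg]
            exact ((Category.assoc _ _ _).trans (whisker_eq _ (fcomp F _ _))).trans (hc (SpO.A j') (SpO.A_le_A (by omega)) (SpO.B_le_A (by omega))).symm }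

/-- Key lemma: two maps equalize `qA i`, `qB i` iff they equalize all the images
under `F` of the common upper bounds of `A i` and `B i`. -/
lemma star (F : SpO n ⥤ C)
    (M : ℕ → C) (e : F.obj SpO.top ≅ M 0)
    (pA : ∀ i : Fin n, M ((i : ℕ) + 1) ⟶ F.obj (SpO.A i))
    (pB : ∀ i : Fin n, M ((i : ℕ) + 1) ⟶ F.obj (SpO.B i))
    (qA : ∀ i : Fin n, F.obj (SpO.A i) ⟶ M (i : ℕ))
    (qB : ∀ i : Fin n, F.obj (SpO.B i) ⟶ M (i : ℕ))
    (hpb : ∀ i : Fin n, IsPullback (pA i) (pB i) (qA i) (qB i))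
    (hqA0 : ∀ (i : Fin n) (h : (i : ℕ) = 0),
      qA i = F.map (homOfLE (SpO.le_top' _)) ≫ e.hom ≫ eqToHom (congrArg M h.symm))
    (hqB0 : ∀ (i : Fin n) (h : (i : ℕ) = 0),
      qB i = F.map (homOfLE (SpO.le_top' _)) ≫ e.hom ≫ eqToHom (congrArg M h.symm))
    (hstepAA : ∀ (i j : Fin n) (h : (j : ℕ) = (i : ℕ) + 1),
      qA j ≫ eqToHom (congrArg M h) ≫ pA i = F.map (homOfLE (SpO.A_le_A (by rw [h]; omega))))
    (hstepAB : ∀ (i j : Fin n) (h : (j : ℕ) = (i : ℕ) + 1),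
      qA j ≫ eqToHom (congrArg M h) ≫ pB i = F.map (homOfLE (SpO.A_le_B (by rw [h]; omega))))
    (hstepBA : ∀ (i j : Fin n) (h : (j : ℕ) = (i : ℕ) + 1),
      qB j ≫ eqToHom (congrArg M h) ≫ pA i = F.map (homOfLE (SpO.B_le_A (by rw [h]; omega))))
    (hstepBB : ∀ (i j : Fin n) (h : (j : ℕ) = (i : ℕ) + 1),
      qB j ≫ eqToHom (congrArg M h) ≫ pB i = F.map (homOfLE (SpO.B_le_B (by rw [h]; omega))))
    (i : Fin n) {X : C} (a : X ⟶ F.obj (SpO.A i)) (b : X ⟶ F.obj (SpO.B i)) :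
    a ≫ qA i = b ≫ qB i ↔
      ∀ (x : SpO n) (h1 : SpO.A i ≤ x) (h2 : SpO.B i ≤ x),
        a ≫ F.map (homOfLE h1) = b ≫ F.map (homOfLE h2) := by
  rcases Nat.eq_zero_or_pos (i : ℕ) with h0 | hpos
  · -- base case : `M i = M 0 ≅ F(top)`
    have hiff : a ≫ qA i = b ≫ qB i ↔
        a ≫ F.map (homOfLE (SpO.le_top' (SpO.A i))) =
          b ≫ F.map (homOfLE (SpO.le_top' (SpO.B i))) := by
      rw [hqA0 i h0, hqB0 i h0]
      simp only [← Category.assoc, cancel_mono]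
    rw [hiff]
    constructor
    · intro hq x h1 h2
      cases x with
      | bot => exact (h1 : False).elim
      | top => exact hq
      | A j =>
        have : (j : ℕ) < (i : ℕ) := h2
        omega
      | B j =>
        have : (j : ℕ) < (i : ℕ) := h1
        omega
    · intro hc
      exact hc SpO.top (SpO.le_top' _) (SpO.le_top' _)
  · -- successor case
    obtain ⟨k, hk⟩ : ∃ k, (i : ℕ) = k + 1 := ⟨(i : ℕ) - 1, by omega⟩
    have hk' : k < n := by have := i.isLt; omega
    set i' : Fin n := ⟨k, hk'⟩ with hi'
    have hii' : (i : ℕ) = (i' : ℕ) + 1 := hk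
    have hAA := hstepAA i' i hii'
    have hAB := hstepAB i' i hii'
    have hBA := hstepBA i' i hii'
    have hBB := hstepBB i' i hii'
    have hlAA : SpO.A i ≤ SpO.A i' := SpO.A_le_A (by omega)
    have hlAB : SpO.A i ≤ SpO.B i' := SpO.A_le_B (by omega)
    have hlBA : SpO.B i ≤ SpO.A i' := SpO.B_le_A (by omega)
    have hlBB : SpO.B i ≤ SpO.B i' := SpO.B_le_B (by omega)
    constructor
    · intro hq x h1 h2
      have hq' : a ≫ qA i ≫ eqToHom (congrArg M hii') =
          b ≫ qB i ≫ eqToHom (congrArg M hii') := by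
        simp only [← Category.assoc]; rw [hq]
      have cA : a ≫ F.map (homOfLE hlAA) = b ≫ F.map (homOfLE hlBA) := by
        have := congrArg (fun t => t ≫ pA i') hq'
        simpa only [Category.assoc, hAA, hBA] using this
      have cB : a ≫ F.map (homOfLE hlAB) = b ≫ F.map (homOfLE hlBB) := by
        have := congrArg (fun t => t ≫ pB i') hq'
        simpa only [Category.assoc, hAB, hBB] using this
      have chain : ∀ {y z : SpO n} (hy1 : SpO.A i ≤ y) (hy2 : SpO.B i ≤ y) (hz : y ≤ z),
          a ≫ F.map (homOfLE hy1) = b ≫ F.map (homOfLE hy2) →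
          a ≫ F.map (homOfLE (hy1.trans hz)) = b ≫ F.map (homOfLE (hy2.trans hz)) := by
        intro y z hy1 hy2 hz hcc
        rw [← fcomp F hy1 hz, ← fcomp F hy2 hz, ← Category.assoc, ← Category.assoc, hcc]
      cases x with
      | bot => exact (h1 : False).elim
      | top => exact chain hlAA hlBA (SpO.le_top' _) cA
      | A j =>
        have hj : (j : ℕ) < (i : ℕ) := h2
        exact chain hlAA hlBA (SpO.A_le_A (by omega) : SpO.A i' ≤ SpO.A j) cA
      | B j =>
        have hj : (j : ℕ) < (i : ℕ) := h1
        exact chain hlAB hlBB (SpO.B_le_B (by omega) : SpO.B i' ≤ SpO.B j) cB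
    · intro hc
      have key : a ≫ qA i ≫ eqToHom (congrArg M hii') =
          b ≫ qB i ≫ eqToHom (congrArg M hii') := by
        apply (hpb i').hom_ext
        · simp only [Category.assoc, hAA, hBA]
          exact hc (SpO.A i') hlAA hlBA
        · simp only [Category.assoc, hAB, hBB]
          exact hc (SpO.B i') hlAB hlBB
      simpa only [← Category.assoc, cancel_mono] using key


lemma mapEq (F : SpO n ⥤ C) {y z : SpO n} (h h' : y ≤ z) :
    F.map (homOfLE h) = F.map (homOfLE h') :=
  congrArg F.map (Subsingleton.elim _ _)

lemma split (F : SpO n ⥤ C) {X : C} (f : X ⟶ F.obj SpO.bot) {y z : SpO n} (h : y ≤ z) :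
    f ≫ F.map (homOfLE (SpO.bot_le' z)) =
      (f ≫ F.map (homOfLE (SpO.bot_le' y))) ≫ F.map (homOfLE h) := by
  rw [Category.assoc, fcomp]

end SpoAux

theorem stmt4 {C : Type u} [Category.{v} C] [HasPullbacks C] {n : ℕ} (hn : 0 < n)
    (F : SpO n ⥤ C)
    (M : ℕ → C) (e : F.obj SpO.top ≅ M 0)
    (pA : ∀ i : Fin n, M ((i : ℕ) + 1) ⟶ F.obj (SpO.A i))
    (pB : ∀ i : Fin n, M ((i : ℕ) + 1) ⟶ F.obj (SpO.B i))
    (qA : ∀ i : Fin n, F.obj (SpO.A i) ⟶ M (i : ℕ))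
    (qB : ∀ i : Fin n, F.obj (SpO.B i) ⟶ M (i : ℕ))
    (hpb : ∀ i : Fin n, IsPullback (pA i) (pB i) (qA i) (qB i))
    (hqA0 : ∀ (i : Fin n) (h : (i : ℕ) = 0),
      qA i = F.map (homOfLE (SpO.le_top' _)) ≫ e.hom ≫ eqToHom (congrArg M h.symm))
    (hqB0 : ∀ (i : Fin n) (h : (i : ℕ) = 0),
      qB i = F.map (homOfLE (SpO.le_top' _)) ≫ e.hom ≫ eqToHom (congrArg M h.symm))
    (hstepAA : ∀ (i j : Fin n) (h : (j : ℕ) = (i : ℕ) + 1),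
      qA j ≫ eqToHom (congrArg M h) ≫ pA i = F.map (homOfLE (SpO.A_le_A (by omega))))
    (hstepAB : ∀ (i j : Fin n) (h : (j : ℕ) = (i : ℕ) + 1),
      qA j ≫ eqToHom (congrArg M h) ≫ pB i = F.map (homOfLE (SpO.A_le_B (by omega))))
    (hstepBA : ∀ (i j : Fin n) (h : (j : ℕ) = (i : ℕ) + 1),
      qB j ≫ eqToHom (congrArg M h) ≫ pA i = F.map (homOfLE (SpO.B_le_A (by omega))))
    (hstepBB : ∀ (i j : Fin n) (h : (j : ℕ) = (i : ℕ) + 1),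
      qB j ≫ eqToHom (congrArg M h) ≫ pB i = F.map (homOfLE (SpO.B_le_B (by omega)))) :
    Nonempty (IsLimit (spoCone F)) ↔
      IsPullback (F.map (homOfLE (SpO.bot_le' (SpO.A ⟨n - 1, by omega⟩))))
        (F.map (homOfLE (SpO.bot_le' (SpO.B ⟨n - 1, by omega⟩))))
        (qA ⟨n - 1, by omega⟩) (qB ⟨n - 1, by omega⟩) := by
  have hm : n - 1 < n := by omega
  have hAm : (SpO.A (⟨n - 1, hm⟩ : Fin n) : SpO n) ≠ SpO.bot := fun h => nomatch h
  have hBm : (SpO.B (⟨n - 1, hm⟩ : Fin n) : SpO n) ≠ SpO.bot := fun h => nomatch h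
  have star := SpoAux.star F M e pA pB qA qB hpb hqA0 hqB0 hstepAA hstepAB hstepBA hstepBB
  constructor
  · rintro ⟨L⟩
    have eq0 : F.map (homOfLE (SpO.bot_le' (SpO.A (⟨n - 1, hm⟩ : Fin n)))) ≫ qA ⟨n - 1, hm⟩
        = F.map (homOfLE (SpO.bot_le' (SpO.B (⟨n - 1, hm⟩ : Fin n)))) ≫ qB ⟨n - 1, hm⟩ := by
      refine (star ⟨n - 1, hm⟩ _ _).2 fun x h1 h2 => ?_
      rw [SpoAux.fcomp, SpoAux.fcomp]
    -- the cone associated to a pullback cone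
    let cn : ∀ s : PullbackCone (qA ⟨n - 1, hm⟩) (qB ⟨n - 1, hm⟩), Cone (spoIncl n ⋙ F) :=
      fun s => SpoAux.spoMkCone hn F s.fst s.snd
        ((star (SpoAux.mfin hn) s.fst s.snd).1 s.condition)
    refine IsPullback.of_isLimit (PullbackCone.IsLimit.mk eq0 (fun s => L.lift (cn s)) ?_ ?_ ?_)
    · intro s
      have key : L.lift (cn s) ≫ F.map (homOfLE (SpO.bot_le' (SpO.A (⟨n - 1, hm⟩ : Fin n))))
          = s.fst ≫ F.map (homOfLE (SpO.A_le_A (Nat.le_sub_one_of_lt hm) :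
              SpO.A (⟨n - 1, hm⟩ : Fin n) ≤ SpO.A ⟨n - 1, hm⟩)) :=
        L.fac (cn s) ⟨SpO.A ⟨n - 1, hm⟩, hAm⟩
      erw [key, show (homOfLE (SpO.A_le_A (Nat.le_sub_one_of_lt hm)) :
          SpO.A (⟨n - 1, hm⟩ : Fin n) ⟶ SpO.A ⟨n - 1, hm⟩) = 𝟙 _ from Subsingleton.elim _ _,
        F.map_id, Category.comp_id]
    · intro s
      have key : L.lift (cn s) ≫ F.map (homOfLE (SpO.bot_le' (SpO.B (⟨n - 1, hm⟩ : Fin n))))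
          = s.snd ≫ F.map (homOfLE (SpO.B_le_B (Nat.le_sub_one_of_lt hm) :
              SpO.B (⟨n - 1, hm⟩ : Fin n) ≤ SpO.B ⟨n - 1, hm⟩)) :=
        L.fac (cn s) ⟨SpO.B ⟨n - 1, hm⟩, hBm⟩
      erw [key, show (homOfLE (SpO.B_le_B (Nat.le_sub_one_of_lt hm)) :
          SpO.B (⟨n - 1, hm⟩ : Fin n) ⟶ SpO.B ⟨n - 1, hm⟩) = 𝟙 _ from Subsingleton.elim _ _,
        F.map_id, Category.comp_id]
    · intro s f hf1 hf2
      refine L.uniq (cn s) f ?_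
      rintro ⟨x, hx⟩
      have hf1' : f ≫ F.map (homOfLE (SpO.bot_le' (SpO.A (⟨n - 1, hm⟩ : Fin n)))) = s.fst := hf1
      have hf2' : f ≫ F.map (homOfLE (SpO.bot_le' (SpO.B (⟨n - 1, hm⟩ : Fin n)))) = s.snd := hf2
      cases x with
      | bot => exact absurd rfl hx
      | top =>
        show f ≫ F.map (homOfLE (SpO.bot_le' SpO.top)) =
          s.fst ≫ F.map (homOfLE (SpO.le_top' (SpO.A (⟨n - 1, hm⟩ : Fin n))))
        rw [SpoAux.split F f (SpO.le_top' (SpO.A (⟨n - 1, hm⟩ : Fin n))), hf1']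
      | A j =>
        show f ≫ F.map (homOfLE (SpO.bot_le' (SpO.A j))) =
          s.fst ≫ F.map (homOfLE (SpO.A_le_A (Nat.le_sub_one_of_lt j.isLt) :
            SpO.A (⟨n - 1, hm⟩ : Fin n) ≤ SpO.A j))
        rw [SpoAux.split F f (SpO.A_le_A (Nat.le_sub_one_of_lt j.isLt) :
          SpO.A (⟨n - 1, hm⟩ : Fin n) ≤ SpO.A j), hf1']
      | B j =>
        show f ≫ F.map (homOfLE (SpO.bot_le' (SpO.B j))) =
          s.snd ≫ F.map (homOfLE (SpO.B_le_B (Nat.le_sub_one_of_lt j.isLt) :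
            SpO.B (⟨n - 1, hm⟩ : Fin n) ≤ SpO.B j))
        rw [SpoAux.split F f (SpO.B_le_B (Nat.le_sub_one_of_lt j.isLt) :
          SpO.B (⟨n - 1, hm⟩ : Fin n) ≤ SpO.B j), hf2']
  · intro P
    refine ⟨IsLimit.ofExistsUnique fun s => ?_⟩
    have cond : s.π.app ⟨SpO.A ⟨n - 1, hm⟩, hAm⟩ ≫ qA ⟨n - 1, hm⟩
        = s.π.app ⟨SpO.B ⟨n - 1, hm⟩, hBm⟩ ≫ qB ⟨n - 1, hm⟩ := by
      refine (star ⟨n - 1, hm⟩ _ _).2 fun x h1 h2 => ?_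
      have hx : x ≠ SpO.bot := by rintro rfl; exact (h1 : False)
      erw [SpoAux.snat F s ⟨SpO.A ⟨n - 1, hm⟩, hAm⟩ ⟨x, hx⟩ h1,
        SpoAux.snat F s ⟨SpO.B ⟨n - 1, hm⟩, hBm⟩ ⟨x, hx⟩ h2]
    have e1 : P.lift _ _ cond ≫ F.map (homOfLE (SpO.bot_le' (SpO.A (⟨n - 1, hm⟩ : Fin n))))
        = s.π.app ⟨SpO.A ⟨n - 1, hm⟩, hAm⟩ := P.lift_fst _ _ cond
    have e2 : P.lift _ _ cond ≫ F.map (homOfLE (SpO.bot_le' (SpO.B (⟨n - 1, hm⟩ : Fin n))))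
        = s.π.app ⟨SpO.B ⟨n - 1, hm⟩, hBm⟩ := P.lift_snd _ _ cond
    refine ⟨P.lift _ _ cond, ?_, ?_⟩
    · rintro ⟨x, hx⟩
      show P.lift _ _ cond ≫ F.map (homOfLE (SpO.bot_le' x)) = s.π.app ⟨x, hx⟩
      cases x with
      | bot => exact absurd rfl hx
      | top =>
        rw [SpoAux.split F _ (SpO.le_top' (SpO.A (⟨n - 1, hm⟩ : Fin n))), e1]
        exact SpoAux.snat F s ⟨SpO.A ⟨n - 1, hm⟩, hAm⟩ ⟨SpO.top, hx⟩ (SpO.le_top' _)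
      | A j =>
        rw [SpoAux.split F _ (SpO.A_le_A (Nat.le_sub_one_of_lt j.isLt) :
          SpO.A (⟨n - 1, hm⟩ : Fin n) ≤ SpO.A j), e1]
        exact SpoAux.snat F s ⟨SpO.A ⟨n - 1, hm⟩, hAm⟩ ⟨SpO.A j, hx⟩ _
      | B j =>
        rw [SpoAux.split F _ (SpO.B_le_B (Nat.le_sub_one_of_lt j.isLt) :
          SpO.B (⟨n - 1, hm⟩ : Fin n) ≤ SpO.B j), e2]
        exact SpoAux.snat F s ⟨SpO.B ⟨n - 1, hm⟩, hBm⟩ ⟨SpO.B j, hx⟩ _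
    · intro g hg
      apply P.hom_ext
      · exact (hg ⟨SpO.A ⟨n - 1, hm⟩, hAm⟩).trans e1.symm
      · exact (hg ⟨SpO.B ⟨n - 1, hm⟩, hBm⟩).trans e2.symm
end

section
/- Let Sp^n = (Sp^1)^{×n} where Sp^1 = {−∞ < A₁, B₁}, and let sp^n = (sp^{n,∘})^◁. Define j_n : Sp^n → sp^n by sending the initial object to the initial object, and (I₁,…,I_n) (not all −∞) to A_k if I_k = A₁ and B_k if I_k = B₁, where k is the least index with I_k ≠ −∞. Then for any ∞-category C, precomposition j_n^* : Fun(sp^n, C) → Fun(Sp^n, C) is fully faithful with essential image the reduced n-uple spans, i.e. the functors sending every morphism in R_n (the morphisms of Sp^n sent to identities by j_n) to equivalences; consequently j_n exhibits sp^n as the ∞-categorical localization Sp^n[R_n^{-1}]. -/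
/-!
STATEMENT 18: Let `Sp^n = (Sp^1)^{×n}` with `Sp^1 = {−∞ < A₁, B₁}`, and let
`sp^n = (sp^{n,∘})^◁` be the n-fold span shape with an initial object adjoined.
Define `j_n : Sp^n → sp^n` sending the initial object to the initial object, and
`(I₁,…,I_n)` (not all `−∞`) to `A_k` (resp. `B_k`) if `I_k = A₁` (resp. `B₁`),
where `k` is the least index with `I_k ≠ −∞`.  Then for any category `C`,
precomposition `j_n^* : Fun(sp^n, C) → Fun(Sp^n, C)` is fully faithful with
essential image the reduced `n`-uple spans — the functors inverting every morphism
of `R_n` (the morphisms of `Sp^n` sent to identities by `j_n`); consequently `j_n`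
exhibits `sp^n` as the localization `Sp^n[R_n⁻¹]`.

Encodings: `Sp^1` is the three-element poset `Sp1`; `Sp^n` is the product poset
`SpN n = Fin n → Sp1`; `sp^n` is `SpLit n = Option (Fin n × Bool)` with `none` the
initial object and `some (k, b)` the object `A_{k+1}`/`B_{k+1}` according to `b`.
-/

open CategoryTheory

universe v u

/-- The poset `Sp^1 = {−∞ < A₁, B₁}`. -/
inductive Sp1 : Type
  | bot : Sp1
  | a : Sp1
  | b : Sp1
  deriving DecidableEq

namespace Sp1

protected def le : Sp1 → Sp1 → Prop
  | .bot, _ => True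
  | .a, .a => True
  | .b, .b => True
  | _, _ => False

instance : Preorder Sp1 where
  le := Sp1.le
  le_refl x := by cases x <;> trivial
  le_trans x y z h₁ h₂ := by cases x <;> cases y <;> cases z <;> simp_all [Sp1.le]

lemma eq_of_le_of_ne_bot {u v : Sp1} (h : u ≤ v) (hu : u ≠ Sp1.bot) : v = u := by
  cases u <;> cases v <;> simp_all [Sp1.le] <;> exact h.elim

end Sp1

/-- The poset `Sp^n = (Sp^1)^{×n}`. -/
def SpN (n : ℕ) : Type := Fin n → Sp1

instance (n : ℕ) : Preorder (SpN n) := inferInstanceAs (Preorder (Fin n → Sp1))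

/-- The poset `sp^n = (sp^{n,∘})^◁`: `none = −∞`, `some (k, true) = A_{k+1}`,
`some (k, false) = B_{k+1}`. -/
def SpLit (n : ℕ) : Type := Option (Fin n × Bool)

namespace SpLit

variable {n : ℕ}

protected def le : SpLit n → SpLit n → Prop
  | none, _ => True
  | some p, some q => (p.2 = q.2 ∧ (q.1 : ℕ) ≤ (p.1 : ℕ)) ∨
      (p.2 ≠ q.2 ∧ (q.1 : ℕ) < (p.1 : ℕ))
  | some _, none => False

instance : Preorder (SpLit n) where
  le := SpLit.le
  le_refl p := by
    rcases p with _ | p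
    · trivial
    · exact Or.inl ⟨rfl, le_refl _⟩
  le_trans p q r h₁ h₂ := by
    rcases p with _ | p
    · trivial
    · rcases q with _ | q
      · exact h₁.elim
      · rcases r with _ | r
        · exact h₂.elim
        · rcases h₁ with ⟨e₁, h₁⟩ | ⟨e₁, h₁⟩ <;> rcases h₂ with ⟨e₂, h₂⟩ | ⟨e₂, h₂⟩
          · exact Or.inl ⟨e₁.trans e₂, le_trans h₂ h₁⟩
          · exact Or.inr ⟨by rw [e₁]; exact e₂, lt_of_lt_of_le h₂ h₁⟩
          · exact Or.inr ⟨by rw [← e₂]; exact e₁, lt_of_le_of_lt h₂ h₁⟩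
          · by_cases h : p.2 = r.2
            · exact Or.inl ⟨h, le_of_lt (h₂.trans h₁)⟩
            · exact Or.inr ⟨h, h₂.trans h₁⟩

end SpLit

/-- The letter of a non-`−∞` element of `Sp^1`: `true` for `A`, `false` for `B`. -/
def letterOf : Sp1 → Bool
  | .a => true
  | _ => false

/-- The underlying map of `j_n : Sp^n → sp^n`. -/
def jfun {n : ℕ} (x : SpN n) : SpLit n :=
  (Fin.find? fun k => decide (x k ≠ Sp1.bot)).map fun k => (k, letterOf (x k))

lemma jfun_monotone {n : ℕ} : Monotone (jfun (n := n)) := by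
  intro x y h
  show SpLit.le (jfun x) (jfun y)
  unfold jfun
  cases hx : Fin.find? fun k => decide (x k ≠ Sp1.bot) with
  | none => trivial
  | some k =>
    have hk : x k ≠ Sp1.bot := of_decide_eq_true (Fin.mem_find?_iff.1 (Option.mem_def.2 hx)).1
    have hyk : y k = x k := Sp1.eq_of_le_of_ne_bot (h k) hk
    have hysome : (Fin.find? fun k => decide (y k ≠ Sp1.bot)).isSome :=
      Fin.isSome_find?_of_eq_true (i := k) (decide_eq_true (by rw [hyk]; exact hk))
    obtain ⟨k', hk'⟩ := Option.isSome_iff_exists.1 hysome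
    have hk'y : y k' ≠ Sp1.bot := of_decide_eq_true (Fin.mem_find?_iff.1 (Option.mem_def.2 hk')).1
    have hle : k' ≤ k := not_lt.1 fun hlt =>
      (Fin.mem_find?_iff.1 (Option.mem_def.2 hk')).2 k hlt (decide_eq_true (by rw [hyk]; exact hk))
    rw [hk']
    show SpLit.le (some (k, letterOf (x k))) (some (k', letterOf (y k')))
    rcases lt_or_eq_of_le hle with hlt | heq
    · by_cases hb : letterOf (x k) = letterOf (y k')
      · exact Or.inl ⟨hb, le_of_lt hlt⟩
      · exact Or.inr ⟨hb, hlt⟩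
    · subst heq
      exact Or.inl ⟨by rw [hyk], le_refl _⟩

/-- The functor `j_n : Sp^n ⥤ sp^n`. -/
def jFunctor (n : ℕ) : SpN n ⥤ SpLit n := jfun_monotone.functor

/-- `R_n`: the morphisms of `Sp^n` sent to identities by `j_n`. -/
def Rn (n : ℕ) : MorphismProperty (SpN n) := fun x y _ => jfun x = jfun y


--------------------------------------------------------------------
-- auxiliary development
--------------------------------------------------------------------

namespace Stmt18

variable {n : ℕ}

/-- the letter of a boolean -/
def letter (b : Bool) : Sp1 := if b then .a else .b

@[simp] lemma letter_ne_bot (b : Bool) : letter b ≠ Sp1.bot := by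
  cases b <;> simp [letter]

@[simp] lemma letterOf_letter (b : Bool) : letterOf (letter b) = b := by
  cases b <;> rfl

lemma letter_letterOf {u : Sp1} (h : u ≠ Sp1.bot) : letter (letterOf u) = u := by
  cases u <;> simp_all [letter, letterOf]

@[simp] lemma Sp1.bot_le (u : Sp1) : Sp1.bot ≤ u := trivial

/-- section of `jfun` on objects -/
def sfun : SpLit n → SpN n
  | none => fun _ => .bot
  | some (k, b) => fun j => if j = k then letter b else .bot

lemma jfun_eq_none_iff (x : SpN n) : jfun x = none ↔ ∀ j, x j = Sp1.bot := by
  show Option.map (fun k => (k, letterOf (x k))) (Fin.find? fun k => decide (x k ≠ Sp1.bot)) =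
    (none : Option (Fin n × Bool)) ↔ _
  rw [Option.map_eq_none_iff, Fin.find?_eq_none_iff]
  simp

lemma jfun_eq_some_iff (x : SpN n) (k : Fin n) (b : Bool) :
    jfun x = some (k, b) ↔ x k = letter b ∧ ∀ j, j < k → x j = Sp1.bot := by
  constructor
  · intro h
    obtain ⟨k', hk', hmap⟩ := Option.map_eq_some_iff.1 h
    simp only [Fin.find?_eq_some_iff, decide_eq_true_eq, decide_eq_false_iff_not, not_not] at hk'
    obtain ⟨h1, h2⟩ := hk'
    obtain ⟨rfl, rfl⟩ : k' = k ∧ letterOf (x k') = b := by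
      simpa [Prod.ext_iff] using hmap
    refine ⟨(letter_letterOf h1).symm, fun j hj => ?_⟩
    exact h2 j hj
  · rintro ⟨h1, h2⟩
    have hfind : Fin.find? (fun j => decide (x j ≠ Sp1.bot)) = some k := by
      rw [Fin.find?_eq_some_iff]
      exact ⟨decide_eq_true (by rw [h1]; exact letter_ne_bot b),
        fun j hj => decide_eq_false (not_not.2 (h2 j hj))⟩
    simp only [jfun, hfind]
    simp [h1]
    rfl

@[simp] lemma jfun_sfun (X : SpLit n) : jfun (sfun X) = X := by
  rcases X with _ | ⟨k, b⟩
  · rw [jfun_eq_none_iff]; intro j; rfl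
  · rw [jfun_eq_some_iff]
    constructor
    · simp [sfun]
    · intro j hj
      simp [sfun, Fin.ne_of_lt hj]

lemma sfun_jfun_le (x : SpN n) : sfun (jfun x) ≤ x := by
  intro j
  cases hx : jfun x with
  | none => exact Sp1.bot_le _
  | some p =>
    obtain ⟨k, b⟩ := p
    rw [jfun_eq_some_iff] at hx
    show sfun (some (k, b)) j ≤ x j
    by_cases hj : j = k
    · subst hj
      simp only [sfun, if_pos rfl, hx.1]
      exact le_refl _
    · simp only [sfun, if_neg hj]
      exact Sp1.bot_le _

/-- pointwise combination -/
def comb (x y : SpN n) : SpN n := fun j => if x j = Sp1.bot then y j else x j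

lemma le_comb_left (x y : SpN n) : x ≤ comb x y := by
  intro j
  unfold comb
  split
  · next h => rw [h]; exact Sp1.bot_le _
  · exact le_refl _

lemma comb_le {x y z : SpN n} (h₁ : x ≤ z) (h₂ : y ≤ z) : comb x y ≤ z := by
  intro j
  unfold comb
  split
  · exact h₂ j
  · exact h₁ j

/-- key coherence: if `jfun x ≤ Z` then `sfun Z ≤ comb x (sfun Z)` -/
lemma sfun_le_comb {x : SpN n} {Z : SpLit n} (h : jfun x ≤ Z) :
    sfun Z ≤ comb x (sfun Z) := by
  intro j
  unfold comb
  split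
  · exact le_refl _
  · next hx =>
    -- x j ≠ bot; show sfun Z j ≤ x j
    by_cases hz : sfun Z j = Sp1.bot
    · rw [hz]; exact Sp1.bot_le _
    · -- sfun Z j ≠ bot : so Z = some (j, b') with sfun Z j = letter b'
      rcases Z with _ | ⟨k', b'⟩
      · exact absurd rfl hz
      · have hj : j = k' := by
          by_contra hne
          exact hz (if_neg hne)
        subst hj
        -- jfun x = some (k, b) with k' ≤ k and x j ≠ bot → j ≥ k ... conclude x k' = letter b'
        cases hjx : jfun x with
        | none =>
          rw [jfun_eq_none_iff] at hjx
          exact absurd (hjx j) hx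
        | some p =>
          obtain ⟨k, b⟩ := p
          rw [hjx] at h
          rw [jfun_eq_some_iff] at hjx
          have hk'k : (j : ℕ) ≤ (k : ℕ) := by
            rcases h with ⟨_, h⟩ | ⟨_, h⟩
            · exact h
            · exact le_of_lt h
          have hkk' : (k : ℕ) ≤ (j : ℕ) := by
            by_contra hlt
            exact hx (hjx.2 j (Fin.lt_def.2 (not_le.1 hlt)))
          have hkeq : k = j := Fin.ext (le_antisymm hkk' hk'k)
          subst hkeq
          have hb : b = b' := by
            rcases h with ⟨hb, _⟩ | ⟨_, hlt⟩
            · exact hb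
            · exact absurd rfl (ne_of_lt hlt)
          subst hb
          rw [show sfun (some (k, b)) k = letter b from if_pos rfl, ← hjx.1]

lemma jfun_comb {x : SpN n} {Z : SpLit n} (h : jfun x ≤ Z) :
    jfun (comb x (sfun Z)) = Z := by
  rcases Z with _ | ⟨k', b'⟩
  · -- Z = none forces jfun x = none
    have hx : jfun x = none := by
      cases hjx : jfun x with
      | none => rfl
      | some p => rw [hjx] at h; exact h.elim
    rw [jfun_eq_none_iff] at hx ⊢
    intro j
    unfold comb
    rw [hx j]
    rfl
  · rw [jfun_eq_some_iff]
    constructor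
    · unfold comb
      split
      · exact if_pos rfl
      · next hx =>
        -- x k' ≠ bot: from sfun_le_comb argument: x k' = letter b'
        have := sfun_le_comb h k'
        unfold comb at this
        rw [if_neg hx] at this
        have h2 : sfun (some (k', b')) k' = letter b' := if_pos rfl
        rw [h2] at this
        exact Sp1.eq_of_le_of_ne_bot this (letter_ne_bot b')
    · intro j hj
      unfold comb
      have hxj : x j = Sp1.bot := by
        cases hjx : jfun x with
        | none => exact (jfun_eq_none_iff x).1 hjx j
        | some p =>
          obtain ⟨k, b⟩ := p
          rw [hjx] at h
          have hk'k : (k' : ℕ) ≤ (k : ℕ) := by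
            rcases h with ⟨_, h⟩ | ⟨_, h⟩
            · exact h
            · exact le_of_lt h
          exact ((jfun_eq_some_iff x k b).1 hjx).2 j
            (Fin.lt_def.2 (lt_of_lt_of_le (Fin.lt_def.1 hj) hk'k))
      rw [if_pos hxj]
      exact if_neg (Fin.ne_of_lt hj)

end Stmt18

namespace Stmt18

variable {n : ℕ}

example (X Y : SpLit n) : Subsingleton (X ⟶ Y) := inferInstance

lemma jsX_le {X Y : SpLit n} (h : X ≤ Y) : jfun (sfun X) ≤ Y := by
  rw [jfun_sfun]; exact h

section Lift

variable {E : Type*} [Category E] (F : SpN n ⥤ E)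

lemma Fmap_comp_eq {x y z : SpN n} (f : x ⟶ y) (g : y ⟶ z) (h : x ≤ z) :
    F.map f ≫ F.map g = F.map (homOfLE h) := by
  have : f ≫ g = homOfLE h := Subsingleton.elim _ _
  rw [← F.map_comp, this]

variable (hF : (Rn n).IsInvertedBy F)

/-- the lift of a reduced functor, on morphisms -/
noncomputable def liftMap {X Y : SpLit n} (h : X ≤ Y) :
    F.obj (sfun X) ⟶ F.obj (sfun Y) :=
  haveI : IsIso (F.map (homOfLE (sfun_le_comb (jsX_le h)))) :=
    hF _ (show jfun (sfun Y) = jfun (comb (sfun X) (sfun Y)) by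
      rw [jfun_sfun, jfun_comb (jsX_le h)])
  F.map (homOfLE (le_comb_left (sfun X) (sfun Y))) ≫
    inv (F.map (homOfLE (sfun_le_comb (jsX_le h))))

lemma conj_eq {x z w w' : SpN n} (h1 : x ≤ w) (h2 : z ≤ w) (hw : w ≤ w') (h2' : z ≤ w')
    [IsIso (F.map (homOfLE h2))] [IsIso (F.map (homOfLE hw))] [IsIso (F.map (homOfLE h2'))] :
    F.map (homOfLE h1) ≫ inv (F.map (homOfLE h2)) =
      F.map (homOfLE (h1.trans hw)) ≫ inv (F.map (homOfLE h2')) := by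
  rw [IsIso.eq_comp_inv, ← Fmap_comp_eq F (homOfLE h2) (homOfLE hw) h2']
  simp only [Category.assoc, IsIso.inv_hom_id_assoc]
  exact Fmap_comp_eq F _ _ _

lemma liftMap_eq {X Y : SpLit n} (h : X ≤ Y) {w : SpN n}
    (h1 : sfun X ≤ w) (h2 : sfun Y ≤ w) (hj : jfun w = Y)
    [IsIso (F.map (homOfLE h2))] :
    liftMap F hF h = F.map (homOfLE h1) ≫ inv (F.map (homOfLE h2)) := by
  have hZ : jfun w ≤ Y := le_of_eq hj
  have hW'le : sfun Y ≤ comb w (sfun Y) := sfun_le_comb hZ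
  have hjW' : jfun (comb w (sfun Y)) = Y := jfun_comb hZ
  have jw0 : jfun (comb (sfun X) (sfun Y)) = Y := jfun_comb (jsX_le h)
  haveI : IsIso (F.map (homOfLE (sfun_le_comb (jsX_le h)))) :=
    hF _ (show jfun (sfun Y) = _ by rw [jfun_sfun, jw0])
  haveI : IsIso (F.map (homOfLE hW'le)) :=
    hF _ (show jfun (sfun Y) = _ by rw [jfun_sfun, hjW'])
  haveI : IsIso (F.map (homOfLE
      (comb_le (h1.trans (le_comb_left w (sfun Y))) hW'le : comb (sfun X) (sfun Y) ≤ _))) :=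
    hF _ (show jfun (comb (sfun X) (sfun Y)) = _ by rw [jw0, hjW'])
  haveI : IsIso (F.map (homOfLE (le_comb_left w (sfun Y)))) :=
    hF _ (show jfun w = _ by rw [hj, hjW'])
  have e1 := conj_eq F (le_comb_left (sfun X) (sfun Y)) (sfun_le_comb (jsX_le h))
      (comb_le (h1.trans (le_comb_left w (sfun Y))) hW'le) hW'le
  have e2 := conj_eq F h1 h2 (le_comb_left w (sfun Y)) hW'le
  rw [liftMap]
  exact e1.trans e2.symm

/-- the lift of a reduced functor -/
noncomputable def liftF : SpLit n ⥤ E where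
  obj X := F.obj (sfun X)
  map f := liftMap F hF (leOfHom f)
  map_id X := by
    haveI : IsIso (F.map (homOfLE (le_refl (sfun X)))) :=
      hF _ (rfl : jfun (sfun X) = jfun (sfun X))
    show liftMap F hF (leOfHom (𝟙 X)) = 𝟙 (F.obj (sfun X))
    rw [liftMap_eq F hF (leOfHom (𝟙 X)) (le_refl (sfun X)) (le_refl (sfun X)) (jfun_sfun X)]
    simp
  map_comp {X Y Z} f g := by
    have hXY := leOfHom f
    have hYZ := leOfHom g
    have jw1 : jfun (comb (sfun X) (sfun Y)) = Y := jfun_comb (jsX_le hXY)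
    have hYZ' : jfun (comb (sfun X) (sfun Y)) ≤ Z := by rw [jw1]; exact hYZ
    have jW : jfun (comb (comb (sfun X) (sfun Y)) (sfun Z)) = Z := jfun_comb hYZ'
    have sX_W : sfun X ≤ comb (comb (sfun X) (sfun Y)) (sfun Z) :=
      (le_comb_left _ _).trans (le_comb_left _ _)
    have sY_w1 : sfun Y ≤ comb (sfun X) (sfun Y) := sfun_le_comb (jsX_le hXY)
    have sY_W : sfun Y ≤ comb (comb (sfun X) (sfun Y)) (sfun Z) :=
      sY_w1.trans (le_comb_left _ _)
    have sZ_W : sfun Z ≤ comb (comb (sfun X) (sfun Y)) (sfun Z) := sfun_le_comb hYZ'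
    haveI : IsIso (F.map (homOfLE sY_w1)) :=
      hF _ (show jfun (sfun Y) = _ by rw [jfun_sfun, jw1])
    haveI : IsIso (F.map (homOfLE sZ_W)) :=
      hF _ (show jfun (sfun Z) = _ by rw [jfun_sfun, jW])
    show liftMap F hF (leOfHom (f ≫ g)) = liftMap F hF (leOfHom f) ≫ liftMap F hF (leOfHom g)
    rw [liftMap_eq F hF (leOfHom (f ≫ g)) sX_W sZ_W jW,
      liftMap_eq F hF (leOfHom g) sY_W sZ_W jW,
      liftMap_eq F hF (leOfHom f) (le_comb_left (sfun X) (sfun Y)) sY_w1 jw1]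
    rw [← Fmap_comp_eq F (homOfLE sY_w1)
      (homOfLE (le_comb_left (comb (sfun X) (sfun Y)) (sfun Z))) sY_W]
    rw [← Fmap_comp_eq F (homOfLE (le_comb_left (sfun X) (sfun Y)))
      (homOfLE (le_comb_left (comb (sfun X) (sfun Y)) (sfun Z))) sX_W]
    simp

end Lift

section Loc

variable (n)

lemma jFunctor_isIso {x y : SpN n} (f : x ⟶ y) (h : Rn n f) :
    IsIso ((jFunctor n).map f) := by
  have hge : jfun y ≤ jfun x := le_of_eq (h : jfun x = jfun y).symm
  exact ⟨homOfLE hge, Subsingleton.elim _ _, Subsingleton.elim _ _⟩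

lemma jInverts : (Rn n).IsInvertedBy (jFunctor n) :=
  fun _ _ f h => jFunctor_isIso n f h

/-- the comparison functor from the abstract localization -/
noncomputable def Phi : (Rn n).Localization ⥤ SpLit n :=
  CategoryTheory.Localization.Construction.lift (jFunctor n) (jInverts n)

lemma fac : (Rn n).Q ⋙ Phi n = jFunctor n :=
  CategoryTheory.Localization.Construction.fac _ _

/-- the inverse comparison functor -/
noncomputable def Psi : SpLit n ⥤ (Rn n).Localization :=
  liftF (Rn n).Q (Rn n).Q_inverts

/-- the canonical isomorphism `jFunctor ⋙ Psi ≅ Q` -/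
noncomputable def sigma : jFunctor n ⋙ Psi n ≅ (Rn n).Q := by
  refine NatIso.ofComponents (fun y => ?_) (fun {y y'} f => ?_)
  · refine @asIso _ _ _ _ ((Rn n).Q.map (homOfLE (sfun_jfun_le y))) ?_
    exact (Rn n).Q_inverts _ (show jfun (sfun (jfun y)) = jfun y from jfun_sfun _)
  · dsimp [Psi, liftF, jFunctor, Monotone.functor]
    change _ ≫ (Rn n).Q.map (homOfLE (sfun_jfun_le y')) =
      (Rn n).Q.map (homOfLE (sfun_jfun_le y)) ≫ _
    have hj : jfun y ≤ jfun y' := leOfHom ((jFunctor n).map f)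
    have jw : jfun (comb (sfun (jfun y)) (sfun (jfun y'))) = jfun y' :=
      jfun_comb (jsX_le hj)
    have hm : comb (sfun (jfun y)) (sfun (jfun y')) ≤ y' :=
      comb_le ((sfun_jfun_le y).trans (leOfHom f)) (sfun_jfun_le y')
    haveI : IsIso ((Rn n).Q.map (homOfLE (sfun_le_comb (jsX_le hj)))) :=
      (Rn n).Q_inverts _ (show jfun (sfun (jfun y')) = _ by rw [jfun_sfun, jw])
    rw [liftMap_eq (Rn n).Q (Rn n).Q_inverts hj
      (le_comb_left (sfun (jfun y)) (sfun (jfun y'))) (sfun_le_comb (jsX_le hj)) jw]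
    rw [← Fmap_comp_eq (Rn n).Q (homOfLE (sfun_le_comb (jsX_le hj))) (homOfLE hm)
      (sfun_jfun_le y')]
    simp only [Category.assoc, IsIso.inv_hom_id_assoc]
    rw [Fmap_comp_eq (Rn n).Q (homOfLE (le_comb_left _ _)) (homOfLE hm)
      ((sfun_jfun_le y).trans (leOfHom f)),
      Fmap_comp_eq (Rn n).Q (homOfLE (sfun_jfun_le y)) f
      ((sfun_jfun_le y).trans (leOfHom f))]

/-- `Psi ⋙ Phi` is isomorphic to the identity -/
noncomputable def counit : Psi n ⋙ Phi n ≅ 𝟭 (SpLit n) :=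
  NatIso.ofComponents
    (fun X => eqToIso ((Functor.congr_obj (fac n) (sfun X)).trans (jfun_sfun X)))
    (fun _ => Subsingleton.elim _ _)

noncomputable instance liftingPhiPsi :
    CategoryTheory.Localization.Lifting (Rn n).Q (Rn n) (jFunctor n ⋙ Psi n)
      (Phi n ⋙ Psi n) :=
  ⟨(Functor.associator _ _ _).symm ≪≫ Functor.isoWhiskerRight (eqToIso (fac n)) (Psi n)⟩

/-- `Phi ⋙ Psi` is isomorphic to the identity -/
noncomputable def unit : 𝟭 ((Rn n).Localization) ≅ Phi n ⋙ Psi n :=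
  (CategoryTheory.Localization.liftNatIso (Rn n).Q (Rn n) (jFunctor n ⋙ Psi n)
    ((Rn n).Q) (Phi n ⋙ Psi n) (𝟭 _) (sigma n)).symm

/-- the equivalence between the abstract localization and `SpLit n` -/
noncomputable def equiv : (Rn n).Localization ≌ SpLit n :=
  CategoryTheory.Equivalence.mk (Phi n) (Psi n) (unit n) (counit n)

lemma isLoc : (jFunctor n).IsLocalization (Rn n) :=
  Functor.IsLocalization.of_equivalence_target (Rn n).Q (Rn n) (jFunctor n) (equiv n)
    (eqToIso (fac n))

end Loc

end Stmt18

theorem stmt18 (n : ℕ) {C : Type u} [Category.{v} C] :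
    -- precomposition with `j_n` is fully faithful …
    ((Functor.whiskeringLeft (SpN n) (SpLit n) C).obj (jFunctor n)).Full ∧
    ((Functor.whiskeringLeft (SpN n) (SpLit n) C).obj (jFunctor n)).Faithful ∧
    -- … with essential image the reduced `n`-uple spans, i.e. the functors
    -- sending the morphisms of `R_n` to isomorphisms (equivalences) …
    (∀ G : SpN n ⥤ C,
      ((Functor.whiskeringLeft (SpN n) (SpLit n) C).obj (jFunctor n)).essImage G ↔
        ∀ ⦃x y : SpN n⦄ (f : x ⟶ y), Rn n f → IsIso (G.map f)) ∧
    -- … consequently `j_n` is the localization of `Sp^n` at `R_n`: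
    (jFunctor n).IsLocalization (Rn n) := by
  haveI hloc : (jFunctor n).IsLocalization (Rn n) := Stmt18.isLoc n
  refine ⟨Localization.full_whiskeringLeft (jFunctor n) (Rn n) C,
    Localization.faithful_whiskeringLeft (jFunctor n) (Rn n) C, ?_, hloc⟩
  intro G
  constructor
  · rintro ⟨H, ⟨e⟩⟩ x y f hf
    have h1 : IsIso ((jFunctor n ⋙ H).map f) := by
      haveI := Stmt18.jFunctor_isIso n f hf
      dsimp
      infer_instance
    exact (NatIso.isIso_map_iff (e : jFunctor n ⋙ H ≅ G) f).1 h1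
  · intro hG
    have hG' : (Rn n).IsInvertedBy G := fun _ _ f hf => hG f hf
    exact ⟨Localization.lift G hG' (jFunctor n),
      ⟨Localization.Lifting.iso (jFunctor n) (Rn n) G (Localization.lift G hG' (jFunctor n))⟩⟩
end
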